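/- Let P(x) ∈ ℂ[x] be a polynomial and let h, r be integers with h ≠ 0 such that the h-th powers r_1^h, ..., r_m^h of the roots of the characteristic polynomial are pairwise distinct and none of them equals 1. Let 𝒮(P) be the set of tuples (P_1(x), ..., P_{m+1}(x)) ∈ ℂ[x]^{m+1} satisfying ∑_{k=1}^{n} P(k)·s_{hk+r} = (∑_{k=1}^{m} P_k(n)·s_{(n+k)h+r}) + P_{m+1}(n) for every positive integer n, and let 𝒮 be the set of tuples (γ_1(x), ..., γ_{m+1}(x)) ∈ ℂ[x]^{m+1} satisfying γ_1(n)·s_{(n+1)h+r} + ⋯ + γ_m(n)·s_{(n+m)h+r} + γ_{m+1}(n) = 0 for every positive integer n. Then there is a bijection between 𝒮(P) and 𝒮; in particular they have equal cardinality. -/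

import Mathlib

open Polynomial
open Polynomial

lemma lemB_aux (z : ℂ) (hz1 : z ≠ 1) :
    ∀ n : ℕ, ∀ P : ℂ[X], P.natDegree ≤ n →
      ∃ Q : ℂ[X], z • Q - Q.comp (X - C 1) = P := by
  intro n
  induction n with
  | zero =>
    intro P hP
    obtain ⟨p, rfl⟩ : ∃ p, P = C p := ⟨P.coeff 0, P.eq_C_of_natDegree_le_zero hP⟩
    refine ⟨C (p * (z - 1)⁻¹), ?_⟩
    have hzz : z - 1 ≠ 0 := sub_ne_zero.mpr hz1
    rw [Polynomial.C_comp, smul_C, smul_eq_mul, ← C_sub]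
    congr 1
    field_simp
  | succ n ih =>
    intro P hP
    have hzz : z - 1 ≠ 0 := sub_ne_zero.mpr hz1
    set c : ℂ := P.coeff (n + 1) * (z - 1)⁻¹ with hc
    set Q₁ : ℂ[X] := c • X ^ (n + 1) with hQ₁
    set R : ℂ[X] := P - (z • Q₁ - Q₁.comp (X - C 1)) with hR
    have hcomp : Q₁.comp (X - C 1) = c • (X - C 1) ^ (n + 1) := by
      rw [hQ₁, smul_comp, X_pow_comp]
    have hdegcomp : ((X - C 1 : ℂ[X]) ^ (n + 1)).natDegree = n + 1 := by
      rw [natDegree_pow, natDegree_X_sub_C, mul_one]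
    have hcoeffcomp : ((X - C 1 : ℂ[X]) ^ (n + 1)).coeff (n + 1) = 1 := by
      have hmo : ((X - C 1 : ℂ[X]) ^ (n + 1)).Monic := (monic_X_sub_C 1).pow _
      have := hmo.coeff_natDegree
      rwa [hdegcomp] at this
    have hRdeg : R.natDegree ≤ n := by
      rw [natDegree_le_iff_coeff_eq_zero]
      intro k hk
      rcases Nat.lt_or_ge k (n + 2) with hk2 | hk2
      · have hkk : k = n + 1 := by omega
        subst hkk
        rw [hR, hcomp, coeff_sub, coeff_sub, coeff_smul, coeff_smul, coeff_smul,
          coeff_X_pow, if_pos rfl, hcoeffcomp]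
        simp only [smul_eq_mul, mul_one, hc]
        field_simp
        ring
      · have h1 : P.coeff k = 0 := coeff_eq_zero_of_natDegree_lt (by omega)
        have h2 : ((X - C 1 : ℂ[X]) ^ (n + 1)).coeff k = 0 :=
          coeff_eq_zero_of_natDegree_lt (by omega)
        rw [hR, hcomp, coeff_sub, coeff_sub, coeff_smul, coeff_smul, coeff_smul,
          coeff_X_pow, if_neg (by omega), h1, h2]
        simp
    obtain ⟨Q₂, hQ₂⟩ := ih R hRdeg
    refine ⟨Q₁ + Q₂, ?_⟩
    rw [smul_add, add_comp, sub_eq_iff_eq_add] at *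
    rw [hQ₂, hR]
    ring

lemma lemB (z : ℂ) (hz1 : z ≠ 1) (P : ℂ[X]) :
    ∃ Q : ℂ[X], z • Q - Q.comp (X - C 1) = P :=
  lemB_aux z hz1 P.natDegree P le_rfl
open Polynomial

lemma lemA (m : ℕ) (hm : 2 ≤ m) (a : Fin m → ℂ) (ha1 : a ⟨0, Nat.lt_of_lt_of_le Nat.two_pos hm⟩ ≠ 0)
    (s : ℤ → ℂ)
    (hrec : ∀ k : ℤ, s (k + m) = ∑ i : Fin m, a i * s (k + (i : ℕ)))
    (rt : Fin m → ℂ)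
    (hroot : ∀ i, rt i ^ m = ∑ j : Fin m, a j * rt i ^ (j : ℕ))
    (hrt : Function.Injective rt)
    (hrt0 : ∀ i, rt i ≠ 0) :
    ∃ c : Fin m → ℂ, ∀ k : ℤ, s k = ∑ i, c i * rt i ^ k := by
  classical
  set V : Matrix (Fin m) (Fin m) ℂ := (Matrix.vandermonde rt).transpose with hV
  have hdet : V.det ≠ 0 := by
    rw [hV, Matrix.det_transpose]
    exact Matrix.det_vandermonde_ne_zero_iff.mpr hrt
  set c : Fin m → ℂ := V⁻¹.mulVec (fun j : Fin m => s ((j : ℕ) : ℤ)) with hcdef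
  have hVc : ∀ j : Fin m, ∑ i, rt i ^ (j : ℕ) * c i = s ((j : ℕ) : ℤ) := by
    intro j
    have h1 : V.mulVec c = fun j : Fin m => s ((j : ℕ) : ℤ) := by
      rw [hcdef, Matrix.mulVec_mulVec, Matrix.mul_nonsing_inv V (isUnit_iff_ne_zero.mpr hdet),
        Matrix.one_mulVec]
    have := congrFun h1 j
    simpa [hV, Matrix.mulVec, Matrix.transpose_apply, Matrix.vandermonde, dotProduct] using this
  refine ⟨c, ?_⟩
  set u : ℤ → ℂ := fun k => ∑ i, c i * rt i ^ k with hu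
  set d : ℤ → ℂ := fun k => s k - u k with hd
  suffices hdz : ∀ k : ℤ, d k = 0 by
    intro k; have := hdz k; rw [hd] at this; simpa [sub_eq_zero, hu] using this
  have hbase : ∀ j : ℕ, j < m → d (j : ℤ) = 0 := by
    intro j hj
    have := hVc ⟨j, hj⟩
    simp only [hd, hu, sub_eq_zero]
    rw [← this]
    exact Finset.sum_congr rfl (fun i _ => by rw [mul_comm, zpow_natCast])
  have hurec : ∀ k : ℤ, u (k + m) = ∑ i : Fin m, a i * u (k + (i : ℕ)) := by
    intro k
    have : ∀ i : Fin m, c i * rt i ^ (k + (m : ℕ) : ℤ)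
        = ∑ j : Fin m, a j * (c i * rt i ^ (k + (j : ℕ) : ℤ)) := by
      intro i
      rw [zpow_add₀ (hrt0 i), zpow_natCast, hroot i, Finset.mul_sum]
      rw [Finset.mul_sum]
      refine Finset.sum_congr rfl (fun j _ => ?_)
      rw [zpow_add₀ (hrt0 i), zpow_natCast]
      ring
    simp only [hu]
    rw [Finset.sum_congr rfl (fun i _ => this i), Finset.sum_comm]
    exact Finset.sum_congr rfl (fun j _ => by rw [Finset.mul_sum])
  have hdrec : ∀ k : ℤ, d (k + m) = ∑ i : Fin m, a i * d (k + (i : ℕ)) := by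
    intro k
    simp only [hd, hrec k, hurec k, mul_sub, ← Finset.sum_sub_distrib]
  have hsolve : ∀ k : ℤ, (∀ j : ℕ, 1 ≤ j → j ≤ m → d (k + j) = 0) → d k = 0 := by
    intro k hk
    have h0 : d (k + m) = 0 := hk m (by omega) le_rfl
    have h1 := hdrec k
    rw [h0] at h1
    have h2 : ∑ i : Fin m, a i * d (k + (i : ℕ))
        = a (⟨0, by omega⟩ : Fin m) * d (k + ((0 : ℕ) : ℤ)) := by
      refine Finset.sum_eq_single_of_mem (⟨0, by omega⟩ : Fin m) (Finset.mem_univ _) ?_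
      intro b _ hb
      have hb1 : 1 ≤ (b : ℕ) := by
        rcases Nat.eq_zero_or_pos (b : ℕ) with h | h
        · exact absurd (Fin.ext h) hb
        · exact h
      rw [hk (b : ℕ) hb1 (le_of_lt b.isLt), mul_zero]
    rw [h2] at h1
    simp only [Nat.cast_zero, add_zero] at h1
    exact (mul_eq_zero.mp h1.symm).resolve_left ha1
  have main : ∀ k : ℤ, ∀ j : ℕ, j < m → d (k + j) = 0 := by
    intro k
    induction k using Int.induction_on with
    | zero => intro j hj; simpa using hbase j hj
    | succ i ih =>
      intro j hj
      rcases Nat.lt_or_ge (j + 1) m with hj2 | hj2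
      · have := ih (j + 1) hj2
        have harg : ((i : ℤ) + 1) + j = (i : ℤ) + ((j + 1 : ℕ) : ℤ) := by push_cast; ring
        rw [harg]; exact this
      · have hjm : j + 1 = m := by omega
        have harg : ((i : ℤ) + 1) + j = (i : ℤ) + ((m : ℕ) : ℤ) := by
          push_cast; omega
        rw [harg, hdrec]
        refine Finset.sum_eq_zero (fun t _ => ?_)
        rw [ih t t.isLt, mul_zero]
    | pred i ih =>
      intro j hj
      cases j with
      | zero =>
        simp only [Nat.cast_zero, add_zero]
        refine hsolve _ (fun t h1 ht => ?_)
        have harg : (-(i : ℤ) - 1) + t = -(i : ℤ) + ((t - 1 : ℕ) : ℤ) := by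
          push_cast [Nat.cast_sub h1]; ring
        rw [harg]
        exact ih (t - 1) (by omega)
      | succ j' =>
        have harg : (-(i : ℤ) - 1) + (j' + 1 : ℕ) = -(i : ℤ) + (j' : ℕ) := by
          push_cast; ring
        rw [harg]
        exact ih j' (by omega)
  intro k
  have := main k 0 (by omega)
  simpa using this
open Polynomial

lemma lemC (m : ℕ) (z : Fin m → ℂ) (hzinj : Function.Injective z) (hz0 : ∀ i, z i ≠ 0)
    (Q : Fin m → ℂ[X]) :
    ∃ Pv : Fin m → ℂ[X], ∀ i, ∑ k : Fin m, (z i ^ ((k : ℕ) + 1)) • Pv k = Q i := by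
  classical
  set M : Matrix (Fin m) (Fin m) ℂ :=
    Matrix.diagonal z * Matrix.vandermonde z with hM
  have hMapp : ∀ i k : Fin m, M i k = z i ^ ((k : ℕ) + 1) := by
    intro i k
    rw [hM, Matrix.diagonal_mul, pow_succ]
    rw [show Matrix.vandermonde z i k = z i ^ (k : ℕ) from rfl]
    ring
  have hdet : M.det ≠ 0 := by
    rw [hM, Matrix.det_mul, Matrix.det_diagonal]
    exact mul_ne_zero (Finset.prod_ne_zero_iff.mpr (fun i _ => hz0 i))
      (Matrix.det_vandermonde_ne_zero_iff.mpr hzinj)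
  refine ⟨fun k => ∑ i, (M⁻¹ k i) • Q i, fun i => ?_⟩
  have hMM : M * M⁻¹ = 1 := Matrix.mul_nonsing_inv M (isUnit_iff_ne_zero.mpr hdet)
  calc ∑ k : Fin m, (z i ^ ((k : ℕ) + 1)) • ∑ j, (M⁻¹ k j) • Q j
      = ∑ j, ((∑ k, M i k * M⁻¹ k j) • Q j) := by
        simp only [Finset.smul_sum, smul_smul, Finset.sum_smul]
        rw [Finset.sum_comm]
        exact Finset.sum_congr rfl (fun j _ => Finset.sum_congr rfl
          (fun k _ => by rw [hMapp]))
    _ = Q i := by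
        have : ∀ j, ∑ k, M i k * M⁻¹ k j = (1 : Matrix (Fin m) (Fin m) ℂ) i j := by
          intro j; rw [← Matrix.mul_apply, hMM]
        simp only [this, Matrix.one_apply]
        simp [Finset.sum_ite_eq]
open Polynomial

lemma telesc (z : ℂ) (P Q : ℂ[X]) (hQ : z • Q - Q.comp (X - C 1) = z • P) (n : ℕ) :
    ∑ k ∈ Finset.Icc 1 n, P.eval (k : ℂ) * z ^ k
      = Q.eval (n : ℂ) * z ^ n - Q.eval 0 := by
  induction n with
  | zero => simp
  | succ n ih =>
    rw [Finset.sum_Icc_succ_top (by omega), ih]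
    have heval := congrArg (eval ((n : ℂ) + 1)) hQ
    simp only [eval_sub, eval_smul, eval_comp, eval_X, eval_sub, eval_one, smul_eq_mul,
      add_sub_cancel_right, eval_C] at heval
    push_cast
    linear_combination (-(z ^ n)) * heval



/-- Lemma 4.1 of the paper: there is a bijection between the set `𝒮(P)`
of tuples `(P_1,…,P_{m+1})` satisfying
`∑_{k=1}^n P(k)·s_{hk+r} = ∑_{k=1}^m P_k(n)·s_{(n+k)h+r} + P_{m+1}(n)` for all `n ≥ 1`, and
the set `𝒮` of tuples `(γ_1,…,γ_{m+1})` satisfying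
`γ_1(n)·s_{(n+1)h+r} + ⋯ + γ_m(n)·s_{(n+m)h+r} + γ_{m+1}(n) = 0` for all `n ≥ 1`; in
particular they have equal cardinality. -/
theorem stmt_10 (m : ℕ) (hm : 2 ≤ m) (a : Fin m → ℂ)
    (ha1 : a ⟨0, by omega⟩ ≠ 0)
    (s : ℤ → ℂ)
    (hrec : ∀ k : ℤ, s (k + m) = ∑ i : Fin m, a i * s (k + (i : ℕ)))
    (hmin : ∀ d : ℕ, d < m → ∀ b : Fin d → ℂ,
      ¬ (∀ k : ℤ, s (k + d) = ∑ i : Fin d, b i * s (k + (i : ℕ))))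
    (hs : ∃ i ∈ Finset.Icc (1 : ℤ) (m : ℤ), s i ≠ 0)
    (rt : Fin m → ℂ)
    (hroot : ∀ i, rt i ^ m = ∑ j : Fin m, a j * rt i ^ (j : ℕ))
    (hrt : Function.Injective rt)
    (P : Polynomial ℂ) (h r : ℤ) (hh : h ≠ 0)
    (hdist : ∀ i j : Fin m, rt i ^ h = rt j ^ h → i = j)
    (hne1 : ∀ i : Fin m, rt i ^ h ≠ 1) :
    Nonempty
      (({Ps : Fin (m + 1) → Polynomial ℂ | ∀ n : ℕ, 0 < n →
          ∑ k ∈ Finset.Icc 1 n, P.eval (k : ℂ) * s (h * (k : ℤ) + r) =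
            (∑ k : Fin m,
              (Ps k.castSucc).eval (n : ℂ) * s (((n : ℤ) + ((k : ℕ) : ℤ) + 1) * h + r))
              + (Ps (Fin.last m)).eval (n : ℂ)} : Set (Fin (m + 1) → Polynomial ℂ)) ≃
        ({γ : Fin (m + 1) → Polynomial ℂ | ∀ n : ℕ, 0 < n →
          (∑ k : Fin m,
            (γ k.castSucc).eval (n : ℂ) * s (((n : ℤ) + ((k : ℕ) : ℤ) + 1) * h + r))
            + (γ (Fin.last m)).eval (n : ℂ) = 0} : Set (Fin (m + 1) → Polynomial ℂ))) := by
    classical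
  -- roots are nonzero
  have hrt0 : ∀ i, rt i ≠ 0 := by
    intro i hi
    have h1 := hroot i
    rw [hi, zero_pow (by omega : m ≠ 0)] at h1
    have h2 : ∑ j : Fin m, a j * (0 : ℂ) ^ (j : ℕ) = a (⟨0, by omega⟩ : Fin m) := by
      rw [Finset.sum_eq_single_of_mem (⟨0, by omega⟩ : Fin m) (Finset.mem_univ _)]
      · simp
      · intro b _ hb
        have hb0 : (b : ℕ) ≠ 0 := fun hx => hb (Fin.ext hx)
        simp [zero_pow hb0]
    rw [h2] at h1
    exact ha1 h1.symm
  obtain ⟨c, hc⟩ := lemA m hm a ha1 s hrec rt hroot hrt hrt0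
  set z : Fin m → ℂ := fun i => rt i ^ h with hzdef
  have hz0 : ∀ i, z i ≠ 0 := fun i => zpow_ne_zero h (hrt0 i)
  have hz1 : ∀ i, z i ≠ 1 := hne1
  have hzinj : Function.Injective z := fun i j hij => hdist i j hij
  set dd : Fin m → ℂ := fun i => c i * rt i ^ r with hdddef
  have hkey : ∀ k : ℤ, s (h * k + r) = ∑ i, dd i * z i ^ k := by
    intro k
    rw [hc (h * k + r)]
    refine Finset.sum_congr rfl (fun i _ => ?_)
    rw [zpow_add₀ (hrt0 i), zpow_mul]
    simp only [hdddef, hzdef]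
    ring
  choose Q hQ using fun i => lemB (z i) (hz1 i) ((z i) • P)
  obtain ⟨Pv, hPv⟩ := lemC m z hzinj hz0 Q
  set Ps0 : Fin (m + 1) → ℂ[X] :=
    Fin.snoc Pv (C (-∑ i, dd i * (Q i).eval 0)) with hPs0def
  have hsval : ∀ (n : ℕ) (k : Fin m),
      s (((n : ℤ) + ((k : ℕ) : ℤ) + 1) * h + r)
        = ∑ i, dd i * (z i ^ n * z i ^ ((k : ℕ) + 1)) := by
    intro n k
    have harg : ((n : ℤ) + ((k : ℕ) : ℤ) + 1) * h + r
        = h * ((n : ℤ) + (((k : ℕ) + 1 : ℕ) : ℤ)) + r := by push_cast; ring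
    rw [harg, hkey]
    refine Finset.sum_congr rfl (fun i _ => ?_)
    rw [zpow_add₀ (hz0 i), zpow_natCast, zpow_natCast]
  -- value of the RHS linear form on any tuple of polynomials
  have hQev : ∀ (i : Fin m) (x : ℂ),
      ∑ k : Fin m, z i ^ ((k : ℕ) + 1) * (Pv k).eval x = (Q i).eval x := by
    intro i x
    have := congrArg (eval x) (hPv i)
    rw [eval_finset_sum] at this
    simpa [smul_eq_mul] using this
  -- the particular solution works
  have hmain : ∀ n : ℕ, 0 < n →
      ∑ k ∈ Finset.Icc 1 n, P.eval (k : ℂ) * s (h * (k : ℤ) + r) =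
        (∑ k : Fin m,
          (Ps0 k.castSucc).eval (n : ℂ) * s (((n : ℤ) + ((k : ℕ) : ℤ) + 1) * h + r))
          + (Ps0 (Fin.last m)).eval (n : ℂ) := by
    intro n hn
    have hL : ∑ k ∈ Finset.Icc 1 n, P.eval (k : ℂ) * s (h * (k : ℤ) + r)
        = ∑ i, dd i * ((Q i).eval (n : ℂ) * z i ^ n - (Q i).eval 0) := by
      calc ∑ k ∈ Finset.Icc 1 n, P.eval (k : ℂ) * s (h * (k : ℤ) + r)
          = ∑ k ∈ Finset.Icc 1 n, ∑ i, dd i * (P.eval (k : ℂ) * z i ^ k) := by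
            refine Finset.sum_congr rfl (fun k _ => ?_)
            rw [hkey, Finset.mul_sum]
            refine Finset.sum_congr rfl (fun i _ => ?_)
            rw [zpow_natCast]
            ring
        _ = ∑ i, dd i * ∑ k ∈ Finset.Icc 1 n, P.eval (k : ℂ) * z i ^ k := by
            rw [Finset.sum_comm]
            exact Finset.sum_congr rfl (fun i _ => by rw [Finset.mul_sum])
        _ = _ := by
            refine Finset.sum_congr rfl (fun i _ => ?_)
            rw [telesc (z i) P (Q i) (hQ i) n]
    have hR : ∑ k : Fin m, (Pv k).eval (n : ℂ) * s (((n : ℤ) + ((k : ℕ) : ℤ) + 1) * h + r)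
        = ∑ i, dd i * (z i ^ n * (Q i).eval (n : ℂ)) := by
      calc ∑ k : Fin m, (Pv k).eval (n : ℂ) * s (((n : ℤ) + ((k : ℕ) : ℤ) + 1) * h + r)
          = ∑ k : Fin m, ∑ i, dd i * (z i ^ n * (z i ^ ((k : ℕ) + 1) * (Pv k).eval (n : ℂ))) := by
            refine Finset.sum_congr rfl (fun k _ => ?_)
            rw [hsval n k, Finset.mul_sum]
            exact Finset.sum_congr rfl (fun i _ => by ring)
        _ = ∑ i, dd i * (z i ^ n * ∑ k : Fin m, z i ^ ((k : ℕ) + 1) * (Pv k).eval (n : ℂ)) := by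
            rw [Finset.sum_comm]
            exact Finset.sum_congr rfl (fun i _ => by rw [Finset.mul_sum, Finset.mul_sum])
        _ = _ := by
            exact Finset.sum_congr rfl (fun i _ => by rw [hQev i])
    have hsnoc1 : ∀ k : Fin m, Ps0 k.castSucc = Pv k := fun k => Fin.snoc_castSucc _ _ _
    have hsnoc2 : Ps0 (Fin.last m) = C (-∑ i, dd i * (Q i).eval 0) := Fin.snoc_last _ _
    simp only [hsnoc1, hsnoc2, eval_C]
    rw [hL, hR]
    simp only [mul_sub]
    rw [Finset.sum_sub_distrib, sub_eq_add_neg]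
    congr 1
    exact Finset.sum_congr rfl (fun i _ => by ring)
  -- linearity of the right-hand side form
  have hlinadd : ∀ (f g : Fin (m + 1) → ℂ[X]) (n : ℕ),
      (∑ k : Fin m, ((f + g) k.castSucc).eval (n : ℂ) * s (((n : ℤ) + ((k : ℕ) : ℤ) + 1) * h + r))
        + ((f + g) (Fin.last m)).eval (n : ℂ)
      = ((∑ k : Fin m, (f k.castSucc).eval (n : ℂ) * s (((n : ℤ) + ((k : ℕ) : ℤ) + 1) * h + r))
          + (f (Fin.last m)).eval (n : ℂ))
        + ((∑ k : Fin m, (g k.castSucc).eval (n : ℂ) * s (((n : ℤ) + ((k : ℕ) : ℤ) + 1) * h + r))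
          + (g (Fin.last m)).eval (n : ℂ)) := by
    intro f g n
    rw [add_add_add_comm]
    congr 1
    · rw [← Finset.sum_add_distrib]
      refine Finset.sum_congr rfl (fun k _ => ?_)
      rw [Pi.add_apply, eval_add, add_mul]
    · rw [Pi.add_apply, eval_add]
  have hlinsub : ∀ (f g : Fin (m + 1) → ℂ[X]) (n : ℕ),
      (∑ k : Fin m, ((f - g) k.castSucc).eval (n : ℂ) * s (((n : ℤ) + ((k : ℕ) : ℤ) + 1) * h + r))
        + ((f - g) (Fin.last m)).eval (n : ℂ)
      = ((∑ k : Fin m, (f k.castSucc).eval (n : ℂ) * s (((n : ℤ) + ((k : ℕ) : ℤ) + 1) * h + r))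
          + (f (Fin.last m)).eval (n : ℂ))
        - ((∑ k : Fin m, (g k.castSucc).eval (n : ℂ) * s (((n : ℤ) + ((k : ℕ) : ℤ) + 1) * h + r))
          + (g (Fin.last m)).eval (n : ℂ)) := by
    intro f g n
    rw [add_sub_add_comm]
    congr 1
    · rw [← Finset.sum_sub_distrib]
      refine Finset.sum_congr rfl (fun k _ => ?_)
      rw [Pi.sub_apply, eval_sub, sub_mul]
    · rw [Pi.sub_apply, eval_sub]
  -- the bijection by translation
  refine ⟨{
      toFun := fun x => ⟨x.1 - Ps0, ?_⟩
      invFun := fun y => ⟨y.1 + Ps0, ?_⟩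
      left_inv := fun x => Subtype.ext (by simp)
      right_inv := fun y => Subtype.ext (by simp) }⟩
  · intro n hn
    have hx := x.2 n hn
    have hp := hmain n hn
    rw [hlinsub, ← hx, ← hp, sub_self]
  · intro n hn
    have hy := y.2 n hn
    have hp := hmain n hn
    rw [hlinadd, hy, zero_add]
    exact hp
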